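/- arXiv:1610.05422 — 3 statements merged into one kernel-verified Lean document; each statement's English description precedes it below -/
import Mathlib

section
/- For each n ∈ ℕ let Xₙ be a path connected metrizable topological space with basepoint xₙ, and let X := ∏_{n∈ℕ} Xₙ with basepoint x := (xₙ)_{n∈ℕ} (so X is path connected and metrizable). Then the strong abelianization ĥ(X, x) is isomorphic as a group to the product ∏_{n∈ℕ} ĥ(Xₙ, xₙ). -/
open CategoryTheory
open scoped Cardinal

attribute [local instance] Path.Homotopic.setoid

/-- The path-homotopy class of a loop `l` based at `x`, as an element of the
fundamental group `π₁(X, x)`. -/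
noncomputable def pathClass {X : Type u} [TopologicalSpace X] {x : X} (l : Path x x) :
    FundamentalGroup X x :=
  FundamentalGroup.fromPath (⟦l⟧ : Path.Homotopic.Quotient x x)

/-- The loop set of a subgroup `G` of `π₁(Y, y)`: the set of loops at `y` (elements of the
loop space `Path y y`, carrying the compact-open/uniform convergence topology) whose
path-homotopy class lies in `G`. -/
def loopSet {Y : Type u} [TopologicalSpace Y] {y : Y} (G : Subgroup (FundamentalGroup Y y)) :
    Set (Path y y) :=
  {l | pathClass l ∈ G}

/-- The smallest closed subgroup of `π₁(Y, y)` containing the commutator subgroup,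
namely the intersection of all subgroups that contain the commutator subgroup and
whose loop set is closed in the loop space. -/
noncomputable def strongCommutator (Y : Type u) [TopologicalSpace Y] (y : Y) :
    Subgroup (FundamentalGroup Y y) :=
  ⨅ (H : Subgroup (FundamentalGroup Y y))
    (_ : commutator (FundamentalGroup Y y) ≤ H ∧ IsClosed (loopSet H)), H

theorem commutator_le_strongCommutator (Y : Type u) [TopologicalSpace Y] (y : Y) :
    commutator (FundamentalGroup Y y) ≤ strongCommutator Y y :=
  le_iInf fun _ => le_iInf fun h => h.1

open scoped commutatorElement in
instance strongCommutator_normal (Y : Type u) [TopologicalSpace Y] (y : Y) :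
    (strongCommutator Y y).Normal := by
  constructor
  intro g hg a
  have h1 : ⁅a, g⁆ ∈ strongCommutator Y y := by
    apply commutator_le_strongCommutator Y y
    rw [commutator_def]
    exact Subgroup.commutator_mem_commutator (Subgroup.mem_top a) (Subgroup.mem_top g)
  have h2 : a * g * a⁻¹ = ⁅a, g⁆ * g := by group
  rw [h2]; exact Subgroup.mul_mem _ h1 hg

/-- The strong abelianization `ĥ(Y, y)`: the quotient of `π₁(Y, y)` by the smallest
closed subgroup containing the commutator subgroup. -/
noncomputable abbrev StrongAb (Y : Type u) [TopologicalSpace Y] (y : Y) : Type u :=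
  FundamentalGroup Y y ⧸ strongCommutator Y y

/-! The projections induce an isomorphism `π₁(∏ Xₙ, x) ≅ ∏ π₁(Xₙ, xₙ)`, and the point is that the
strong commutator of the product is the kernel of the induced map `π₁(∏ Xₙ, x) → ∏ ĥ(Xₙ, xₙ)`.
The loop set of that kernel is an intersection of preimages of closed loop sets under the
continuous coordinate projections of loops, so the kernel contains the strong commutator.
Conversely, pulling a closed subgroup `H ⊇ [π₁, π₁]` back along the inclusions `Xₙ → ∏ X` shows
that `H` contains each factor's strong commutator, hence the class of every truncation of a loop
`α` of the kernel (coordinates `< k` follow `α`, the others stay at the basepoint). These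
truncations are the values at `k ∈ ℕ` of a continuous family of loops indexed by `ℕ∞` whose value
at `⊤` is `α`, so `α` lies in the closed loop set of `H`. -/

theorem commutator_le_comap_commutator {G G' : Type*} [Group G] [Group G']
    (f : G →* G') : commutator G ≤ (commutator G').comap f := by
  rw [← Subgroup.map_le_iff_le_comap, map_commutator_eq, commutator_def]
  exact Subgroup.commutator_mono le_top le_top

section Loops

variable {Y Z : Type*} [TopologicalSpace Y] [TopologicalSpace Z] {y : Y} {z : Z}

theorem pathClass_surjective : Function.Surjective (pathClass : Path y y → FundamentalGroup Y y) :=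
  Quotient.mk'_surjective

theorem pathClass_refl : pathClass (Path.refl y) = 1 := rfl

def loopMap (f : C(Y, Z)) (h : f y = z) (p : Path y y) : Path z z :=
  (p.map f.continuous).cast h.symm h.symm

@[simp] theorem loopMap_apply (f : C(Y, Z)) (h : f y = z) (p : Path y y) (t : unitInterval) :
    loopMap f h p t = f (p t) := rfl

theorem continuous_loopMap (f : C(Y, Z)) (h : f y = z) : Continuous (loopMap f h) :=
  Path.continuous_uncurry_iff.1 (f.continuous.comp continuous_eval)

theorem mapOfEq_pathClass (f : C(Y, Z)) (h : f y = z) (p : Path y y) :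
    FundamentalGroup.mapOfEq f h (pathClass p) = pathClass (loopMap f h p) :=
  FundamentalGroup.mapOfEq_apply f h _

theorem loopSet_comap_mapOfEq (f : C(Y, Z)) (h : f y = z) (H : Subgroup (FundamentalGroup Z z)) :
    loopSet (H.comap (FundamentalGroup.mapOfEq f h)) = loopMap f h ⁻¹' loopSet H := by
  ext p
  simp only [loopSet, Set.mem_ofPred_eq, Subgroup.mem_comap, Set.mem_preimage, mapOfEq_pathClass]

end Loops

section StrongCommutator

variable {Y Z : Type*} [TopologicalSpace Y] [TopologicalSpace Z] {y : Y} {z : Z}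

theorem strongCommutator_le {H : Subgroup (FundamentalGroup Y y)}
    (hH : commutator (FundamentalGroup Y y) ≤ H) (hc : IsClosed (loopSet H)) :
    strongCommutator Y y ≤ H :=
  iInf₂_le H ⟨hH, hc⟩

theorem loopSet_iInf {ι : Sort*} (H : ι → Subgroup (FundamentalGroup Y y)) :
    loopSet (⨅ i, H i) = ⋂ i, loopSet (H i) := by
  ext p
  simp [loopSet, Subgroup.mem_iInf]

theorem isClosed_loopSet_strongCommutator : IsClosed (loopSet (strongCommutator Y y)) := by
  simp only [strongCommutator, loopSet_iInf]
  exact isClosed_iInter fun H => isClosed_iInter fun hH => hH.2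

theorem IsClosed.loopSet_comap_mapOfEq {H : Subgroup (FundamentalGroup Z z)}
    (hc : IsClosed (loopSet H)) (f : C(Y, Z)) (h : f y = z) :
    IsClosed (loopSet (H.comap (FundamentalGroup.mapOfEq f h))) := by
  rw [_root_.loopSet_comap_mapOfEq]
  exact hc.preimage (continuous_loopMap f h)

theorem strongCommutator_le_comap_mapOfEq (f : C(Y, Z)) (h : f y = z)
    {H : Subgroup (FundamentalGroup Z z)} (hH : commutator (FundamentalGroup Z z) ≤ H)
    (hc : IsClosed (loopSet H)) :
    strongCommutator Y y ≤ H.comap (FundamentalGroup.mapOfEq f h) :=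
  strongCommutator_le ((commutator_le_comap_commutator _).trans (Subgroup.comap_mono hH))
    (hc.loopSet_comap_mapOfEq f h)

end StrongCommutator

namespace FundamentalGroup

variable {ι : Type*} {X : ι → Type*} [∀ i, TopologicalSpace (X i)] (x : ∀ i, X i)

noncomputable def toPi : FundamentalGroup (∀ i, X i) x →* ∀ i, FundamentalGroup (X i) (x i) :=
  MonoidHom.pi fun i => mapOfEq (ContinuousMap.eval i) rfl

theorem toPi_apply (g : FundamentalGroup (∀ i, X i) x) (i : ι) :
    toPi x g i = fromPath (Path.Homotopic.proj i g.toPath) :=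
  (mapOfEq_apply (ContinuousMap.eval i) rfl g).trans (Path.Homotopic.Quotient.cast_rfl_rfl _)

theorem toPi_pathClass (p : Path x x) (i : ι) :
    toPi x (pathClass p) i = pathClass (p.map (continuous_apply i)) :=
  mapOfEq_pathClass (ContinuousMap.eval i) rfl p

theorem toPi_bijective : Function.Bijective (toPi x) := by
  refine ⟨fun g g' hg => ?_, fun a => ⟨fromPath (Path.Homotopic.pi fun i => (a i).toPath), ?_⟩⟩
  · have hproj (i : ι) : Path.Homotopic.proj i g.toPath = Path.Homotopic.proj i g'.toPath := by
      simpa only [toPi_apply] using congrFun hg i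
    change g.toPath = g'.toPath
    rw [← Path.Homotopic.pi_proj g.toPath, ← Path.Homotopic.pi_proj g'.toPath]
    exact congrArg Path.Homotopic.pi (funext hproj)
  · funext i
    rw [toPi_apply]
    exact Path.Homotopic.proj_pi i _

variable [DecidableEq ι]

noncomputable def single (i : ι) :
    FundamentalGroup (X i) (x i) →* FundamentalGroup (∀ i, X i) x :=
  mapOfEq ⟨Function.update x i, continuous_const.update i continuous_id⟩ (Function.update_eq_self i x)

theorem toPi_single (i : ι) (a : FundamentalGroup (X i) (x i)) :
    toPi x (single x i a) = Pi.mulSingle i a := by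
  obtain ⟨p, rfl⟩ := pathClass_surjective a
  funext j
  rw [single, mapOfEq_pathClass, toPi_pathClass]
  rcases eq_or_ne j i with rfl | hj
  · rw [Pi.mulSingle_eq_same]
    congr 1
    ext t
    simp
  · rw [Pi.mulSingle_eq_of_ne hj, ← pathClass_refl]
    congr 1
    ext t
    simp [Function.update_of_ne hj]

end FundamentalGroup

section Truncation

variable {X : ℕ → Type*} [∀ n, TopologicalSpace (X n)] {x : ∀ n, X n}

theorem ENat.isClopen_Ioi_natCast (n : ℕ) : IsClopen (Set.Ioi (n : ℕ∞)) := by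
  have : Set.Ioi (n : ℕ∞) = Set.Ici ((n : ℕ∞) + 1) := by
    ext k
    exact (ENat.add_one_le_iff (ENat.natCast_ne_top n)).symm
  exact ⟨this ▸ isClosed_Ici, isOpen_Ioi⟩

def truncLoop (α : Path x x) (k : ℕ∞) : Path x x where
  toFun t n := if (n : ℕ∞) < k then α t n else x n
  continuous_toFun := continuous_pi fun n => by split_ifs <;> fun_prop
  source' := by simp
  target' := by simp

theorem continuous_truncLoop (α : Path x x) : Continuous (truncLoop α) := by
  refine Path.continuous_uncurry_iff.1
    (continuous_pi fun n => Continuous.if ?_ (by fun_prop) (by fun_prop))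
  change ∀ a ∈ frontier (Prod.fst ⁻¹' Set.Ioi (n : ℕ∞)), _
  rw [isClopen_iff_frontier_eq_empty.1 ((ENat.isClopen_Ioi_natCast n).preimage continuous_fst)]
  simp

theorem truncLoop_top (α : Path x x) : truncLoop α ⊤ = α := by
  ext t n
  simp [truncLoop]

theorem truncLoop_zero (α : Path x x) : truncLoop α 0 = Path.refl x := by
  ext t n
  simp [truncLoop]

theorem toPi_pathClass_truncLoop (α : Path x x) (k : ℕ∞) (n : ℕ) :
    FundamentalGroup.toPi x (pathClass (truncLoop α k)) n =
      if (n : ℕ∞) < k then FundamentalGroup.toPi x (pathClass α) n else 1 := by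
  rw [FundamentalGroup.toPi_pathClass, FundamentalGroup.toPi_pathClass]
  split_ifs with h
  · congr 1
    ext t
    simp [truncLoop, h]
  · rw [← pathClass_refl]
    congr 1
    ext t
    simp [truncLoop, h]

theorem pathClass_truncLoop_succ (α : Path x x) (k : ℕ) :
    pathClass (truncLoop α ↑(k + 1)) =
      FundamentalGroup.single x k (FundamentalGroup.toPi x (pathClass α) k) *
        pathClass (truncLoop α k) := by
  refine (FundamentalGroup.toPi_bijective x).1 (funext fun n => ?_)
  rw [map_mul, FundamentalGroup.toPi_single, Pi.mul_apply, toPi_pathClass_truncLoop,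
    toPi_pathClass_truncLoop]
  simp only [Nat.cast_lt]
  rcases lt_trichotomy n k with h | rfl | h
  · simp [h, h.trans k.lt_succ_self, Pi.mulSingle_eq_of_ne h.ne]
  · simp
  · simp [h.not_gt, Nat.not_lt_of_le h, Pi.mulSingle_eq_of_ne h.ne']

theorem IsClosed.mem_of_truncLoop_mem {s : Set (Path x x)} (hs : IsClosed s) {α : Path x x}
    (h : ∀ k : ℕ, truncLoop α k ∈ s) : α ∈ s := by
  rw [← truncLoop_top α]
  exact hs.mem_of_tendsto
    (((continuous_truncLoop α).tendsto ⊤).comp ENat.tendsto_natCast_nhds_top)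
    (Filter.Eventually.of_forall h)

theorem pathClass_truncLoop_mem {H : Subgroup (FundamentalGroup (∀ n, X n) x)} {α : Path x x}
    (h : ∀ n, FundamentalGroup.single x n (FundamentalGroup.toPi x (pathClass α) n) ∈ H)
    (k : ℕ) : pathClass (truncLoop α k) ∈ H := by
  induction k with
  | zero => simpa [truncLoop_zero, pathClass_refl] using H.one_mem
  | succ k ih => simpa only [pathClass_truncLoop_succ] using H.mul_mem (h k) ih

end Truncation

section StrongAbPi

variable {ι : Type*} {X : ι → Type*} [∀ i, TopologicalSpace (X i)] (x : ∀ i, X i)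

noncomputable def toPiStrongAb : FundamentalGroup (∀ i, X i) x →* ∀ i, StrongAb (X i) (x i) :=
  MonoidHom.pi fun i =>
    (QuotientGroup.mk' _).comp (FundamentalGroup.mapOfEq (ContinuousMap.eval i) rfl)

theorem toPiStrongAb_surjective : Function.Surjective (toPiStrongAb x) :=
  (Function.Surjective.piMap fun _ => QuotientGroup.mk_surjective).comp
    (FundamentalGroup.toPi_bijective x).2

theorem ker_toPiStrongAb : (toPiStrongAb x).ker = ⨅ i,
    (strongCommutator (X i) (x i)).comap (FundamentalGroup.mapOfEq (ContinuousMap.eval i) rfl) := by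
  ext g
  simp only [MonoidHom.mem_ker, Subgroup.mem_iInf, funext_iff]
  exact forall_congr' fun i => QuotientGroup.eq_one_iff _

end StrongAbPi

theorem strongCommutator_pi_eq_ker {X : ℕ → Type*} [∀ n, TopologicalSpace (X n)] (x : ∀ n, X n) :
    strongCommutator (∀ n, X n) x = (toPiStrongAb x).ker := by
  rw [ker_toPiStrongAb]
  apply le_antisymm
  · refine strongCommutator_le (le_iInf fun n => ?_) ?_
    · exact (commutator_le_comap_commutator _).trans
        (Subgroup.comap_mono (commutator_le_strongCommutator _ _))
    · rw [loopSet_iInf]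
      exact isClosed_iInter fun n =>
        isClosed_loopSet_strongCommutator.loopSet_comap_mapOfEq _ _
  · refine le_iInf₂ fun H hH g hg => ?_
    obtain ⟨α, rfl⟩ := pathClass_surjective g
    refine hH.2.mem_of_truncLoop_mem (pathClass_truncLoop_mem fun n => ?_)
    exact strongCommutator_le_comap_mapOfEq _ _ hH.1 hH.2 (Subgroup.mem_iInf.1 hg n)

theorem stmt7_general (X : ℕ → Type) [∀ n, TopologicalSpace (X n)]
    (x : ∀ n, X n) :
    Nonempty (StrongAb (∀ n, X n) x ≃* ∀ n, StrongAb (X n) (x n)) :=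
  ⟨(QuotientGroup.quotientMulEquivOfEq (strongCommutator_pi_eq_ker x)).trans
    (QuotientGroup.quotientKerEquivOfSurjective _ (toPiStrongAb_surjective x))⟩

/-- If `(Xₙ, xₙ)` are path connected metrizable pointed spaces, then the
strong abelianization of the product `∏ₙ Xₙ` at `(xₙ)ₙ` is isomorphic to the product of
the strong abelianizations `∏ₙ ĥ(Xₙ, xₙ)`. -/
theorem stmt7 (X : ℕ → Type) [∀ n, TopologicalSpace (X n)]
    [∀ n, TopologicalSpace.MetrizableSpace (X n)] [∀ n, PathConnectedSpace (X n)]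
    (x : ∀ n, X n) :
    Nonempty (StrongAb (∀ n, X n) x ≃* ∀ n, StrongAb (X n) (x n)) :=
  stmt7_general X x
end

section
/- Let P be the set of prime numbers and A := ∏_{p∈P} ℤ/pℤ. The torsion subgroup tor(A) = ⨁_{p∈P} ℤ/pℤ is not a direct summand of A: there is no subgroup C of A such that tor(A) ∩ C = {0} and tor(A) + C = A. -/
/-- In `A = ∏_{p prime} ℤ/pℤ`, the torsion subgroup
(`⨁_{p prime} ℤ/pℤ`, the finitely supported elements) is not a direct summand: there is
no subgroup `C ≤ A` with `tor(A) ⊓ C = {0}` and `tor(A) + C = A`. -/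
theorem stmt15 :
    ¬ ∃ C : AddSubgroup (∀ p : Nat.Primes, ZMod p),
        AddCommGroup.torsion (∀ p : Nat.Primes, ZMod p) ⊓ C = ⊥ ∧
        AddCommGroup.torsion (∀ p : Nat.Primes, ZMod p) ⊔ C = ⊤ := by
  rintro ⟨C, hinf, hsup⟩
  set A := ∀ p : Nat.Primes, ZMod p with hA
  have hC : ∀ c ∈ C, c = 0 := by
    intro c hc
    funext p
    haveI : Fact (p : ℕ).Prime := ⟨p.2⟩
    set b : A := fun q => if h : q = p then 0 else (((p : ℕ) : ZMod q))⁻¹ * c q with hb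
    have htb : ((p : ℕ) • b - c) ∈ AddCommGroup.torsion A := by
      rw [AddCommGroup.mem_torsion, isOfFinAddOrder_iff_nsmul_eq_zero]
      refine ⟨p, p.2.pos, ?_⟩
      funext q
      haveI : Fact (q : ℕ).Prime := ⟨q.2⟩
      show (p : ℕ) • ((p : ℕ) • b q - c q) = 0
      by_cases h : q = p
      · subst h
        have hbq : b q = 0 := by simp [hb]
        rw [hbq, smul_zero, zero_sub, nsmul_eq_mul, ZMod.natCast_self, zero_mul]
      · have hbq : b q = (((p : ℕ) : ZMod q))⁻¹ * c q := by simp [hb, h]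
        rw [hbq]
        have hne : (((p : ℕ) : ZMod q)) ≠ 0 := by
          rw [Ne, ZMod.natCast_eq_zero_iff]
          intro hdvd
          exact h (Nat.Primes.coe_nat_injective
            ((Nat.prime_dvd_prime_iff_eq q.2 p.2).mp hdvd).symm ▸ rfl)
        rw [nsmul_eq_mul, nsmul_eq_mul, ← mul_assoc, mul_inv_cancel₀ hne, one_mul,
          sub_self, mul_zero]
    have hbmem : b ∈ AddCommGroup.torsion A ⊔ C := hsup ▸ AddSubgroup.mem_top b
    rcases AddSubgroup.mem_sup.mp hbmem with ⟨t, ht, c', hc', htc⟩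
    have hkey : (p : ℕ) • c' - c = 0 := by
      have hmem : (p : ℕ) • c' - c ∈ AddCommGroup.torsion A ⊓ C := by
        rw [AddSubgroup.mem_inf]
        constructor
        · have heq : (p : ℕ) • c' - c = ((p : ℕ) • b - c) - (p : ℕ) • t := by
            rw [← htc, smul_add]; abel
          rw [heq]
          exact sub_mem htb ((AddCommGroup.torsion A).nsmul_mem ht _)
        · exact sub_mem (C.nsmul_mem hc' _) hc
      rw [hinf] at hmem
      exact hmem
    have hcc : c = (p : ℕ) • c' := (sub_eq_zero.mp hkey).symm
    show c p = (0 : ZMod p)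
    have : c p = (p : ℕ) • c' p := by rw [hcc]; rfl
    rw [this, nsmul_eq_mul, ZMod.natCast_self, zero_mul]
  have hCbot : C = ⊥ := by
    ext x; simp only [AddSubgroup.mem_bot]
    exact ⟨fun h => hC x h, fun h => h ▸ C.zero_mem⟩
  rw [hCbot, sup_bot_eq] at hsup
  have h1 : (fun _ => 1 : A) ∈ AddCommGroup.torsion A := hsup ▸ AddSubgroup.mem_top _
  rw [AddCommGroup.mem_torsion, isOfFinAddOrder_iff_nsmul_eq_zero] at h1
  rcases h1 with ⟨n, hn, hn0⟩
  obtain ⟨q, hq, hqp⟩ := Nat.exists_infinite_primes (n + 1)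
  haveI : Fact q.Prime := ⟨hqp⟩
  have h2 : (n : ZMod q) = 0 := by
    have := congr_fun hn0 ⟨q, hqp⟩
    rw [show ((n • (fun _ => 1 : A)) ⟨q, hqp⟩ : ZMod q) = n • (1 : ZMod q) from rfl,
      nsmul_eq_mul, mul_one] at this
    exact this
  have hdvd : q ∣ n := (ZMod.natCast_eq_zero_iff n q).mp h2
  exact absurd (Nat.le_of_dvd hn hdvd) (by omega)
end

section
/- For every abelian group A there exists a subgroup B of A such that: (i) the quotient A/B has no infinitely divisible elements, and (ii) for every abelian group C with no infinitely divisible elements and every group homomorphism φ : A → C, B is contained in the kernel of φ. Consequently A/B is the largest quotient of A with no infinitely divisible elements. -/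
universe u v

/-- An element `a` of an abelian group is infinitely divisible if `a ≠ 0` and there are
infinitely many positive integers `n` such that `a = n • b` for some `b`. -/
def InfinitelyDivisible {C : Type*} [AddCommGroup C] (a : C) : Prop :=
  a ≠ 0 ∧ {n : ℕ | 0 < n ∧ ∃ b : C, n • b = a}.Infinite

lemma not_infDiv_of_injective {G : Type*} {H : Type*} [AddCommGroup G] [AddCommGroup H]
    (f : G →+ H) (hf : Function.Injective f)
    (hH : ∀ c : H, ¬ InfinitelyDivisible c) (g : G) : ¬ InfinitelyDivisible g := by
  rintro ⟨hg0, hginf⟩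
  apply hH (f g)
  refine ⟨fun h => hg0 (hf (by simpa using h)), ?_⟩
  refine hginf.mono ?_
  rintro n ⟨hn, b, hb⟩
  exact ⟨hn, f b, by rw [← hb, map_nsmul]⟩

lemma pi_not_infDiv {ι : Type*} {G : ι → Type*} [∀ i, AddCommGroup (G i)]
    (h : ∀ i (c : G i), ¬ InfinitelyDivisible c) (x : ∀ i, G i) :
    ¬ InfinitelyDivisible x := by
  rintro ⟨hx0, hxinf⟩
  obtain ⟨i, hi⟩ : ∃ i, x i ≠ 0 := by
    by_contra h'; push_neg at h'; exact hx0 (funext h')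
  apply h i (x i)
  refine ⟨hi, hxinf.mono ?_⟩
  rintro n ⟨hn, b, hb⟩
  exact ⟨hn, b i, by rw [← hb]; simp⟩

/-- Every abelian group `A` has a subgroup `B` such that `A/B` has no
infinitely divisible elements and `B` is contained in the kernel of every homomorphism
from `A` to an abelian group with no infinitely divisible elements; thus `A/B` is the
largest quotient of `A` with no infinitely divisible elements. -/
theorem stmt17 (A : Type u) [AddCommGroup A] :
    ∃ B : AddSubgroup A,
      (∀ c : A ⧸ B, ¬ InfinitelyDivisible c) ∧
      ∀ (C : Type v) [AddCommGroup C],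
        (∀ c : C, ¬ InfinitelyDivisible c) → ∀ φ : A →+ C, B ≤ φ.ker := by
  classical
  set S : Set (AddSubgroup A) := {B' | ∀ c : A ⧸ B', ¬ InfinitelyDivisible c} with hS
  let ψ : A →+ (∀ B' : S, A ⧸ (B' : AddSubgroup A)) :=
    AddMonoidHom.mk' (fun a B' => QuotientAddGroup.mk a)
      (by intro a b; funext B'; rfl)
  refine ⟨ψ.ker, ?_, ?_⟩
  · exact fun c => not_infDiv_of_injective (QuotientAddGroup.kerLift ψ)
      (QuotientAddGroup.kerLift_injective ψ) (pi_not_infDiv fun B' => B'.2) c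
  · intro C _ hC φ a ha
    have hkerS : φ.ker ∈ S := by
      intro c
      exact not_infDiv_of_injective (QuotientAddGroup.kerLift φ)
        (QuotientAddGroup.kerLift_injective φ) hC c
    have : ψ a = 0 := ha
    have h2 : (QuotientAddGroup.mk a : A ⧸ φ.ker) = 0 := by
      have := congrFun this ⟨φ.ker, hkerS⟩
      simpa [ψ] using this
    exact (QuotientAddGroup.eq_zero_iff a).mp h2
end
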